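/- Define, for integers N ≥ k+1 ≥ 2, the rational number a_{(k)}^{(N)} = (∏_{i=1}^{k} (N−i)/(2N−2i−1)) · r_{(k)}(N−k). Then for every integer N ≥ 2: (i) a_{(1)}^{(N)} = (N−1)/(2N−3), and (ii) a_{(N−1)}^{(N)} = (−1)^{N−1}·((N−1)/(2N−3))·(2N−5). -/

import Mathlib

open Polynomial

/-- The defining interpolation conditions of the polynomial `r_{(k)}` (`k ≥ 1`):
degree `≤ 2k−1`, zeros at `−1, …, −(k−1)`, and value
`(−2)^{−(k−1)}·(1/2)_{k−1}/(k−1)!` at the points `1/2 − i` for `i = 0, 1, …, k`. -/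
def rCond (k : ℕ) (p : Polynomial ℚ) : Prop :=
  p.natDegree ≤ 2 * k - 1 ∧
  (∀ i : ℕ, 1 ≤ i → i ≤ k - 1 → p.eval (-(i : ℚ)) = 0) ∧
  (∀ i : ℕ, i ≤ k →
    p.eval (1 / 2 - (i : ℚ))
      = (-2 : ℚ) ^ (-((k : ℤ) - 1)) * (ascPochhammer ℚ (k - 1)).eval (1 / 2)
          / ((k - 1).factorial : ℚ))

/-- The coefficient `a_{(k)}^{(N)} = (∏_{i=1}^{k} (N−i)/(2N−2i−1))·r_{(k)}(N−k)`,
expressed via any polynomial `p` satisfying the interpolation conditions of `r_{(k)}`. -/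
def aCoeff (k N : ℕ) (p : Polynomial ℚ) : ℚ :=
  (∏ i ∈ Finset.Icc 1 k, ((N : ℚ) - (i : ℚ)) / (2 * (N : ℚ) - 2 * (i : ℚ) - 1))
    * p.eval ((N : ℚ) - (k : ℚ))


/-!
For `k = 1` the polynomial has degree `≤ 1` and the same value `1` at `±1/2`, so it is `1`.

For `k = N - 1 = m + 1` only `r_{(k)}(1)` is needed. The barycentric form of Lagrange interpolation
at the `2k` nodes writes it as a sum over the nodes `1/2 - j` alone, where `r_{(k)}` takes one
constant value `c`; the barycentric weights there are Pochhammer quotients at `1/2`, which collapse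
to `(1 - 2j)/2 · C(2m+3, 2j+1)`. The parity sums of a row of Pascal's triangle then give
`r_{(k)}(1) = (1 - 2m) 4^m c`.
-/

open Finset

section Pochhammer

variable {R : Type*} [CommRing R]

theorem ascPochhammer_eval_eq_prod_range (n : ℕ) (a : R) :
    (ascPochhammer R n).eval a = ∏ t ∈ range n, (a + t) := by
  induction n with
  | zero => simp
  | succ n ih => rw [ascPochhammer_succ_eval, ih, prod_range_succ]

theorem ascPochhammer_eval_add (a : R) (n l : ℕ) :
    (ascPochhammer R (n + l)).eval a
      = (ascPochhammer R n).eval a * (ascPochhammer R l).eval (a + n) := by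
  simp only [ascPochhammer_eval_eq_prod_range, prod_range_add, Nat.cast_add, add_assoc]

theorem ascPochhammer_eval_sub_natCast_self (a : R) (n : ℕ) :
    (ascPochhammer R n).eval (a - n) = (-1) ^ n * (ascPochhammer R n).eval (1 - a) := by
  rw [show a - n = -(n - a) by ring, ascPochhammer_eval_neg_eq_descPochhammer,
    descPochhammer_eval_eq_ascPochhammer, show (n : R) - a - n + 1 = 1 - a by ring]

variable {K : Type*} [Field K] [CharZero K]

theorem ascPochhammer_eval_half_mul (n : ℕ) :
    (ascPochhammer K n).eval (1 / 2) * (4 ^ n * n.factorial) = (2 * n).factorial := by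
  induction n with
  | zero => simp
  | succ n ih =>
    rw [ascPochhammer_succ_eval, show 2 * (n + 1) = 2 * n + 1 + 1 by ring, Nat.factorial_succ,
      Nat.factorial_succ, Nat.factorial_succ]
    push_cast
    linear_combination (2 * (n : K) + 1) * (2 * n + 2) * ih

theorem ascPochhammer_eval_half (n : ℕ) :
    (ascPochhammer K n).eval (1 / 2) = (2 * n).factorial / (4 ^ n * n.factorial) :=
  eq_div_of_mul_eq (mul_ne_zero (pow_ne_zero _ (by norm_num)) (mod_cast n.factorial_ne_zero))
    (ascPochhammer_eval_half_mul n)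

theorem ascPochhammer_eval_half_sub {j n : ℕ} (h : j ≤ n) :
    (ascPochhammer K n).eval (1 / 2 - j : K)
      = (-1) ^ j * (ascPochhammer K j).eval (1 / 2) * (ascPochhammer K (n - j)).eval (1 / 2) := by
  obtain ⟨l, rfl⟩ := Nat.exists_eq_add_of_le h
  rw [ascPochhammer_eval_add, ascPochhammer_eval_sub_natCast_self, Nat.add_sub_cancel_left]
  norm_num

end Pochhammer

section Binomial

theorem Finset.sum_range_two_mul {M : Type*} [AddCommMonoid M] (f : ℕ → M) (n : ℕ) :
    ∑ i ∈ range (2 * n), f i = ∑ j ∈ range n, (f (2 * j) + f (2 * j + 1)) := by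
  induction n with
  | zero => simp
  | succ n ih => rw [Nat.mul_succ, sum_range_succ, sum_range_succ, ih, sum_range_succ, add_assoc]

theorem Nat.sum_range_choose_of_lt {n M : ℕ} (h : n < M) : ∑ i ∈ range M, n.choose i = 2 ^ n := by
  obtain ⟨d, rfl⟩ : ∃ d, M = n + 1 + d := ⟨M - (n + 1), by omega⟩
  rw [sum_range_add, Nat.sum_range_choose, add_eq_left]
  exact sum_eq_zero fun i _ => Nat.choose_eq_zero_of_lt (by omega)

theorem Nat.sum_range_choose_two_mul_add_one {n J : ℕ} (h : n < 2 * J) :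
    ∑ j ∈ range J, (n + 1).choose (2 * j + 1) = 2 ^ n := by
  simp only [Nat.choose_succ_succ']
  rw [← sum_range_two_mul, Nat.sum_range_choose_of_lt h]

theorem Nat.sum_range_choose_two_mul {n J : ℕ} (h : n + 1 < 2 * J) :
    ∑ j ∈ range J, (n + 1).choose (2 * j) = 2 ^ n := by
  have hall := sum_range_two_mul (fun i => (n + 1).choose i) J
  rw [Nat.sum_range_choose_of_lt h, sum_add_distrib,
    Nat.sum_range_choose_two_mul_add_one (by omega), pow_succ] at hall
  omega

theorem sum_range_one_sub_two_mul_mul_choose (m : ℕ) :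
    ∑ j ∈ range (m + 2), (1 - 2 * (j : ℚ)) / 2 * (2 * m + 3).choose (2 * j + 1)
      = (1 - 2 * m) * 4 ^ m := by
  have hterm (j : ℕ) : (1 - 2 * (j : ℚ)) / 2 * (2 * m + 3).choose (2 * j + 1)
      = (2 * m + 3).choose (2 * j + 1) - (2 * m + 3) / 2 * (2 * m + 2).choose (2 * j) := by
    have hq : ((2 * m + 3 : ℕ) : ℚ) * (2 * m + 2).choose (2 * j)
        = (2 * m + 3).choose (2 * j + 1) * (2 * j + 1 : ℕ) :=
      mod_cast Nat.add_one_mul_choose_eq (2 * m + 2) (2 * j)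
    push_cast at hq
    linear_combination hq / 2
  have hodd : ∑ j ∈ range (m + 2), ((2 * m + 3).choose (2 * j + 1) : ℚ) = 2 ^ (2 * m + 2) :=
    mod_cast Nat.sum_range_choose_two_mul_add_one (n := 2 * m + 2) (by omega)
  have heven : ∑ j ∈ range (m + 2), ((2 * m + 2).choose (2 * j) : ℚ) = 2 ^ (2 * m + 1) :=
    mod_cast Nat.sum_range_choose_two_mul (n := 2 * m + 1) (by omega)
  rw [sum_congr rfl fun j _ => hterm j, sum_sub_distrib, ← mul_sum, hodd, heven, pow_succ,
    pow_succ, pow_mul]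
  ring

end Binomial

theorem Finset.prod_range_erase {M : Type*} [CommMonoid M] (f : ℕ → M) {j n : ℕ} (h : j < n) :
    ∏ t ∈ (range n).erase j, f t
      = (∏ t ∈ range j, f t) * ∏ t ∈ range (n - 1 - j), f (j + 1 + t) := by
  have hsplit : (range n).erase j = range j ∪ Ico (j + 1) n := by
    ext t; simp only [mem_erase, mem_range, mem_union, mem_Ico]; omega
  rw [hsplit, prod_union (disjoint_left.2 fun t h₁ h₂ => by simp at h₁ h₂; omega),
    prod_Ico_eq_prod_range, show n - (j + 1) = n - 1 - j by omega]

theorem Lagrange.eval_eq_eval_nodal_mul_sum {F ι : Type*} [Field F] [DecidableEq ι]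
    {s : Finset ι} {v : ι → F} (hvs : Set.InjOn v s) {p : F[X]} (hp : p.degree < #s) {x : F}
    (hx : ∀ i ∈ s, x ≠ v i) :
    p.eval x = (Lagrange.nodal s v).eval x
      * ∑ i ∈ s, Lagrange.nodalWeight s v i * (x - v i)⁻¹ * p.eval (v i) := by
  conv_lhs => rw [Lagrange.eq_interpolate hvs hp]
  exact Lagrange.eval_interpolate_not_at_node _ hx

/-- The `2k` interpolation nodes of `r_{(k)}`, `k = m + 1`: `inl j ↦ 1/2 - j` for `j ≤ k` and
`inr i ↦ -(i + 1)` for `i < k - 1`. -/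
def rNode : ℕ ⊕ ℕ → ℚ := Sum.elim (fun j => 1 / 2 - j) (fun i => -(i + 1))

def rNodes (m : ℕ) : Finset (ℕ ⊕ ℕ) := (range (m + 2)).disjSum (range m)

theorem rNode_injective : Function.Injective rNode := by
  refine Function.Injective.sumElim (fun a b h => by simpa using h) (fun a b h => by simpa using h)
    fun j i h => ?_
  have : 2 * j = 2 * i + 3 := by
    have : ((2 * j : ℕ) : ℚ) = (2 * i + 3 : ℕ) := by push_cast; linarith
    exact_mod_cast this
  omega

theorem card_rNodes (m : ℕ) : #(rNodes m) = 2 * m + 2 := by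
  rw [rNodes, card_disjSum, card_range, card_range]; ring

theorem sum_rNodes {M : Type*} [AddCommMonoid M] (m : ℕ) (f : ℕ ⊕ ℕ → M) :
    ∑ i ∈ rNodes m, f i = ∑ j ∈ range (m + 2), f (.inl j) + ∑ i ∈ range m, f (.inr i) :=
  sum_disjSum _ _ _

theorem eval_nodal_rNodes_one (m : ℕ) :
    (Lagrange.nodal (rNodes m) rNode).eval 1
      = (ascPochhammer ℚ (m + 2)).eval (1 / 2) * (m + 1).factorial := by
  have h := factorial_mul_ascPochhammer ℚ 1 m
  rw [add_comm 1 m] at h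
  rw [Lagrange.eval_nodal, rNodes, prod_disjSum, ← h, ascPochhammer_eval_eq_prod_range,
    ascPochhammer_eval_eq_prod_range]
  simp only [rNode, Sum.elim_inl, Sum.elim_inr, Nat.factorial_one, Nat.cast_one, one_mul]
  congr 1 <;> refine prod_congr rfl fun t _ => ?_ <;> ring

theorem nodalWeight_rNodes_inl_inv_eq_prod {m j : ℕ} (hj : j < m + 2) :
    (Lagrange.nodalWeight (rNodes m) rNode (.inl j))⁻¹
      = (-1) ^ j * j.factorial * (m + 1 - j).factorial
        * (ascPochhammer ℚ m).eval (3 / 2 - j : ℚ) := by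
  have herase : (rNodes m).erase (.inl j) = ((range (m + 2)).erase j).disjSum (range m) := by
    ext (t | t) <;> simp [rNodes]
  have hleft := ascPochhammer_eval_sub_natCast_self (0 : ℚ) j
  rw [zero_sub, sub_zero, ascPochhammer_eval_one] at hleft
  rw [Lagrange.nodalWeight, prod_inv_distrib, inv_inv, herase, prod_disjSum,
    prod_range_erase _ hj, show m + 2 - 1 - j = m + 1 - j by omega,
    ← ascPochhammer_eval_one ℚ (m + 1 - j), ← hleft, ascPochhammer_eval_eq_prod_range,
    ascPochhammer_eval_eq_prod_range, ascPochhammer_eval_eq_prod_range]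
  simp only [rNode, Sum.elim_inl, Sum.elim_inr]
  congr 1; congr 1
  all_goals refine prod_congr rfl fun t _ => ?_
  all_goals push_cast; ring

theorem nodalWeight_rNodes_inl_inv {m j : ℕ} (hj : j < m + 2) :
    (Lagrange.nodalWeight (rNodes m) rNode (.inl j))⁻¹
      = j.factorial * (m + 1 - j).factorial * (ascPochhammer ℚ j).eval (1 / 2)
        * (ascPochhammer ℚ (m + 1 - j)).eval (1 / 2) / (1 / 2 - j) := by
  have hj' : (1 / 2 - j : ℚ) ≠ 0 := by
    intro h
    have : 2 * j = 1 := by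
      have : ((2 * j : ℕ) : ℚ) = (1 : ℕ) := by push_cast; linarith
      exact_mod_cast this
    omega
  have hshift : (1 / 2 - j : ℚ) * (ascPochhammer ℚ m).eval (3 / 2 - j : ℚ)
      = (-1) ^ j * (ascPochhammer ℚ j).eval (1 / 2)
        * (ascPochhammer ℚ (m + 1 - j)).eval (1 / 2) := by
    have := ascPochhammer_eval_add (1 / 2 - j : ℚ) 1 m
    rw [add_comm 1 m, ascPochhammer_eval_half_sub (by omega : j ≤ m + 1), ascPochhammer_one,
      eval_X] at this
    rw [this]; push_cast; ring_nf
  have hsq : ((-1 : ℚ) ^ j) ^ 2 = 1 := by rw [← pow_mul, mul_comm, pow_mul]; norm_num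
  rw [eq_div_iff hj', nodalWeight_rNodes_inl_inv_eq_prod hj]
  linear_combination ((-1) ^ j * j.factorial * (m + 1 - j).factorial : ℚ) * hshift
    + (j.factorial * (m + 1 - j).factorial * (ascPochhammer ℚ j).eval (1 / 2)
      * (ascPochhammer ℚ (m + 1 - j)).eval (1 / 2) : ℚ) * hsq

theorem eval_nodal_rNodes_one_mul_nodalWeight {m j : ℕ} (hj : j < m + 2) :
    (Lagrange.nodal (rNodes m) rNode).eval 1
        * (Lagrange.nodalWeight (rNodes m) rNode (.inl j) * (1 - rNode (.inl j))⁻¹)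
      = (1 - 2 * (j : ℚ)) / 2 * (2 * m + 3).choose (2 * j + 1) := by
  obtain ⟨d, hd⟩ : ∃ d, m + 1 = j + d := ⟨m + 1 - j, by omega⟩
  have hm : (m : ℚ) = j + d - 1 := by
    have : ((m + 1 : ℕ) : ℚ) = (j + d : ℕ) := by rw [hd]
    push_cast at this; linarith
  rw [← inv_inv (Lagrange.nodalWeight _ _ _), nodalWeight_rNodes_inl_inv hj,
    eval_nodal_rNodes_one, show m + 1 - j = d by omega, ascPochhammer_eval_half,
    ascPochhammer_eval_half, ascPochhammer_eval_half,
    Nat.cast_choose ℚ (by omega : 2 * j + 1 ≤ 2 * m + 3),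
    show 2 * m + 3 - (2 * j + 1) = 2 * d by omega, show 2 * (m + 2) = 2 * m + 3 + 1 by ring,
    Nat.factorial_succ (2 * m + 3), Nat.factorial_succ (m + 1), Nat.factorial_succ (2 * j),
    show m + 2 = j + d + 1 by omega, pow_add, pow_add]
  simp only [rNode, Sum.elim_inl, show (1 : ℚ) - (1 / 2 - j) = (2 * j + 1) / 2 by ring]
  push_cast
  rw [hm]
  field_simp
  ring

theorem eval_one_eq_of_interpolation {m : ℕ} {p : ℚ[X]} {c : ℚ} (hdeg : p.natDegree ≤ 2 * m + 1)
    (hzero : ∀ i < m, p.eval (-(i + 1 : ℚ)) = 0) (hval : ∀ j < m + 2, p.eval (1 / 2 - j : ℚ) = c) :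
    p.eval 1 = (1 - 2 * m) * 4 ^ m * c := by
  have hdeg' : p.degree < #(rNodes m) := by
    rw [card_rNodes]
    exact degree_le_natDegree.trans_lt (by exact_mod_cast Nat.lt_succ_of_le hdeg)
  have hnode : ∀ i ∈ rNodes m, (1 : ℚ) ≠ rNode i := by
    rintro (j | i) - h <;> simp only [rNode, Sum.elim_inl, Sum.elim_inr] at h
    · have : (0 : ℚ) ≤ j := j.cast_nonneg
      linarith
    · have : (0 : ℚ) ≤ i := i.cast_nonneg
      linarith
  rw [Lagrange.eval_eq_eval_nodal_mul_sum rNode_injective.injOn hdeg' hnode,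
    sum_rNodes, mul_add, mul_sum, mul_sum]
  rw [sum_eq_zero (s := range m) fun i hi => by
    rw [rNode, Sum.elim_inr, hzero i (mem_range.1 hi), mul_zero, mul_zero], add_zero,
    ← sum_range_one_sub_two_mul_mul_choose, mul_comm, mul_sum]
  refine sum_congr rfl fun j hj => ?_
  rw [← eval_nodal_rNodes_one_mul_nodalWeight (mem_range.1 hj),
    show rNode (.inl j) = 1 / 2 - j from rfl, hval j (mem_range.1 hj)]
  ring

theorem eq_one_of_rCond_one {p : ℚ[X]} (hp : rCond 1 p) : p = 1 := by
  obtain ⟨hdeg, -, hval⟩ := hp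
  have hinj : Set.InjOn (fun i : ℕ => (1 / 2 - i : ℚ)) (range 2) := fun a _ b _ h => by
    simpa using h
  have hdeg' : p.degree < #(range 2) := by
    rw [card_range]
    exact degree_le_natDegree.trans_lt (by exact_mod_cast Nat.lt_succ_of_le hdeg)
  rw [Lagrange.eq_interpolate hinj hdeg', ← Lagrange.interpolate_one hinj ⟨0, by simp⟩]
  refine Lagrange.interpolate_eq_of_values_eq_on _ _ fun i hi => ?_
  rw [hval i (by simpa [Nat.lt_succ_iff] using hi)]
  simp

theorem eval_one_of_rCond {m : ℕ} {p : ℚ[X]} (hp : rCond (m + 1) p) :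
    p.eval 1 = (1 - 2 * m) * 4 ^ m
      * ((-1) ^ m * (ascPochhammer ℚ m).eval (1 / 2) / (2 ^ m * m.factorial)) := by
  obtain ⟨hdeg, hzero, hval⟩ := hp
  refine eval_one_eq_of_interpolation (by omega) (fun i hi => ?_) (fun j hj => ?_)
  · simpa using hzero (i + 1) (by omega) (by omega)
  · rw [hval j (by omega), Nat.add_sub_cancel, Nat.cast_add_one, add_sub_cancel_right, zpow_neg,
      zpow_natCast, neg_pow, mul_inv, ← inv_pow, inv_neg_one]
    ring

theorem prod_Icc_eq_factorial_div_ascPochhammer_half (k : ℕ) :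
    ∏ i ∈ Icc 1 k, ((k + 1 : ℚ) - i) / (2 * (k + 1 : ℚ) - 2 * i - 1)
      = k.factorial / (2 ^ k * (ascPochhammer ℚ k).eval (1 / 2)) := by
  rw [← ascPochhammer_eval_one, ascPochhammer_eval_eq_prod_range, ascPochhammer_eval_eq_prod_range,
    show (2 : ℚ) ^ k = ∏ _t ∈ range k, 2 by simp, ← prod_mul_distrib, ← prod_div_distrib]
  refine prod_nbij' (fun i => k - i) (fun t => k - t) (fun i hi => ?_) (fun t ht => ?_)
    (fun i hi => ?_) (fun t ht => ?_) (fun i hi => ?_)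
  all_goals simp only [mem_Icc, mem_range] at *
  any_goals omega
  rw [Nat.cast_sub hi.2]
  ring_nf

/-- For every integer `N ≥ 2`:
(i) `a_{(1)}^{(N)} = (N−1)/(2N−3)`, and
(ii) `a_{(N−1)}^{(N)} = (−1)^{N−1}·((N−1)/(2N−3))·(2N−5)`. -/
theorem a_coeff_extreme_values (N : ℕ) (hN : 2 ≤ N) :
    (∀ p : Polynomial ℚ, rCond 1 p → aCoeff 1 N p = ((N : ℚ) - 1) / (2 * (N : ℚ) - 3)) ∧
    (∀ p : Polynomial ℚ, rCond (N - 1) p →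
      aCoeff (N - 1) N p
        = (-1 : ℚ) ^ (N - 1) * (((N : ℚ) - 1) / (2 * (N : ℚ) - 3)) * (2 * (N : ℚ) - 5)) := by
  refine ⟨fun p hp => ?_, fun p hp => ?_⟩
  · rw [aCoeff, eq_one_of_rCond_one hp, eval_one, Icc_self, prod_singleton]
    ring
  · obtain ⟨m, rfl⟩ : ∃ m, N = m + 2 := ⟨N - 2, by omega⟩
    rw [show m + 2 - 1 = m + 1 by omega] at hp ⊢
    have hprod := prod_Icc_eq_factorial_div_ascPochhammer_half (m + 1)
    have hpoch := ascPochhammer_succ_eval m (1 / 2 : ℚ)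
    rw [aCoeff]
    push_cast at hprod ⊢
    rw [show (m + 2 : ℚ) = m + 1 + 1 by ring, hprod, add_sub_cancel_left,
      eval_one_of_rCond hp, hpoch, Nat.factorial_succ, pow_succ, show (4 : ℚ) ^ m = 2 ^ m * 2 ^ m by
        rw [← mul_pow]; norm_num, show 2 * ((m : ℚ) + 1 + 1) - 3 = 2 * m + 1 by ring,
      show (1 / 2 + m : ℚ) = (2 * m + 1) / 2 by ring]
    have hhalf : (ascPochhammer ℚ m).eval (1 / 2) ≠ 0 := (ascPochhammer_pos m _ (by norm_num)).ne'
    have hodd : (2 * m + 1 : ℚ) ≠ 0 := by positivity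
    push_cast
    field_simp
    ring
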